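/- Suppose the discount function satisfies δ(i)δ(j) ≤ δ(i+j) for all i,j ∈ ℕ. Then for any two equilibria S, T ∈ ℰ, one has J(x, ρ(x, S∩T)) ≥ max(J(x, ρ(x,S)), J(x, ρ(x,T))) for all x ∈ 𝕏; in particular, Θ(S∩T) ⊆ S∩T. -/

import Mathlib

open MeasureTheory ProbabilityTheory Set Filter Topology
open scoped ENNReal ENat

noncomputable section

/-- The σ-algebra generated by the first `n+1` coordinates of the path space:
the natural filtration of the coordinate process at time `n`. -/
def pathSigma (𝕏 : Type*) [m : MeasurableSpace 𝕏] (n : ℕ) : MeasurableSpace (ℕ → 𝕏) :=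
  ⨆ i ∈ Finset.range (n + 1), MeasurableSpace.comap (fun ω : ℕ → 𝕏 => ω i) m

/-- `Pr` is the family of laws of the time-homogeneous Markov chain with one-step
transition kernel `Q`: under `Pr x` the chain starts at `x`, and the Markov property
`Pr^x(X_{n+1} ∈ A | 𝓕_n) = Q(X_n, A)` holds. -/
structure IsMarkovChainLaw {𝕏 : Type*} [MeasurableSpace 𝕏]
    (Pr : Kernel 𝕏 (ℕ → 𝕏)) (Q : Kernel 𝕏 𝕏) : Prop where
  start : ∀ x : 𝕏, Pr x {ω | ω 0 = x} = 1
  markov : ∀ (x : 𝕏) (n : ℕ) (B : Set (ℕ → 𝕏)), MeasurableSet[pathSigma 𝕏 n] B →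
    ∀ A : Set 𝕏, MeasurableSet A →
      Pr x (B ∩ {ω | ω (n + 1) ∈ A}) = ∫⁻ ω in B, Q (ω n) A ∂(Pr x)

/-- The first hitting time `ρ(x,S) = inf {t ≥ 1 : X_t ∈ S}` along the path `ω`
(equal to `⊤` if `S` is never reached at a time `≥ 1`). -/
def hitTime {𝕏 : Type*} (S : Set 𝕏) (ω : ℕ → 𝕏) : ℕ∞ :=
  sInf {n : ℕ∞ | ∃ t : ℕ, n = (t : ℕ∞) ∧ 1 ≤ t ∧ ω t ∈ S}

/-- The discounted payoff `δ(ρ(x,S)) f(X_{ρ(x,S)})` collected along the path `ω`,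
with the convention that it vanishes when `S` is never hit. -/
def stopPayoff {𝕏 : Type*} (δ : ℕ → ℝ) (f : 𝕏 → ℝ) (S : Set 𝕏) (ω : ℕ → 𝕏) : ℝ :=
  if hitTime S ω = ⊤ then 0
  else δ (hitTime S ω).toNat * f (ω (hitTime S ω).toNat)

/-- The objective value `J(x, ρ(x,S)) = 𝔼^x[δ(ρ(x,S)) f(X_{ρ(x,S)})]`. -/
def valJ {𝕏 : Type*} [MeasurableSpace 𝕏] (Pr : Kernel 𝕏 (ℕ → 𝕏)) (δ : ℕ → ℝ) (f : 𝕏 → ℝ)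
    (S : Set 𝕏) (x : 𝕏) : ℝ :=
  ∫ ω, stopPayoff δ f S ω ∂(Pr x)

/-- The operator `Θ(S) = {x ∈ 𝕏 : f(x) ≥ J(x, ρ(x,S))}`. -/
def Θ {𝕏 : Type*} [MeasurableSpace 𝕏] (Pr : Kernel 𝕏 (ℕ → 𝕏)) (δ : ℕ → ℝ) (f : 𝕏 → ℝ)
    (S : Set 𝕏) : Set 𝕏 :=
  {x | valJ Pr δ f S x ≤ f x}

/-- A Borel set `S ⊆ 𝕏` is an equilibrium if `Θ(S) = S`. -/
def IsEquilibrium {𝕏 : Type*} [MeasurableSpace 𝕏] (Pr : Kernel 𝕏 (ℕ → 𝕏)) (δ : ℕ → ℝ)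
    (f : 𝕏 → ℝ) (S : Set 𝕏) : Prop :=
  MeasurableSet S ∧ Θ Pr δ f S = S

/-- The value `V(x,S) = max (f x) (J(x, ρ(x,S)))` associated with an equilibrium `S`. -/
def valV {𝕏 : Type*} [MeasurableSpace 𝕏] (Pr : Kernel 𝕏 (ℕ → 𝕏)) (δ : ℕ → ℝ) (f : 𝕏 → ℝ)
    (S : Set 𝕏) (x : 𝕏) : ℝ :=
  max (f x) (valJ Pr δ f S x)

/-!
Write `J_k(W, x)` for the value of stopping at `ρ(x, W)` under the discount `t ↦ δ (k + t)`,
i.e. when `k` periods have already elapsed. Conditioning on the first step of the chain gives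
`J_k(W, x) = ∫ (if y ∈ W then δ(k+1) f(y) else J_{k+1}(W, y)) Q(x, dy)`. For an equilibrium `T`
and `y ∉ T` we have `f(y) ≤ J_0(T, y)`, and decreasing impatience upgrades this to
`δ(k) f(y) ≤ J_k(T, y)`. Comparing the one-step expansions for `S`, `T` and `S ∩ T` case by case
shows that the deficit `max(J_k(S, ·), J_k(T, ·)) - J_k(S ∩ T, ·)` is bounded by any uniform bound
on the deficit at level `k + 1`. Since every `J_k` lies in `[0, C δ(k+1)]` when `f ≤ C`,
iterating `n` times bounds the deficit at level `0` by `C δ(n+1)`, which tends to `0`.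
-/

def pathShift {α : Type*} (ω : ℕ → α) : ℕ → α := fun n => ω (n + 1)

@[simp]
lemma pathShift_apply {α : Type*} (ω : ℕ → α) (n : ℕ) : pathShift ω n = ω (n + 1) := rfl

lemma measurable_pathShift {α : Type*} [MeasurableSpace α] :
    Measurable (pathShift : (ℕ → α) → ℕ → α) :=
  measurable_pi_lambda _ fun n => measurable_pi_apply (n + 1)

section HitTime

variable {𝕏 : Type*} {S : Set 𝕏} {ω : ℕ → 𝕏}

lemma hitTime_eq_top_iff : hitTime S ω = ⊤ ↔ ∀ t, 1 ≤ t → ω t ∉ S := by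
  simp only [hitTime, sInf_eq_top, mem_ofPred_eq]
  constructor
  · exact fun h t ht htS => ENat.natCast_ne_top t (h t ⟨t, rfl, ht, htS⟩)
  · rintro h _ ⟨t, rfl, ht, htS⟩
    exact absurd htS (h t ht)

lemma hitTime_eq_coe_iff {t : ℕ} :
    hitTime S ω = t ↔ 1 ≤ t ∧ ω t ∈ S ∧ ∀ s, 1 ≤ s → s < t → ω s ∉ S := by
  constructor
  · intro h
    have hne : {n : ℕ∞ | ∃ t : ℕ, n = t ∧ 1 ≤ t ∧ ω t ∈ S}.Nonempty := by
      by_contra hempty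
      rw [not_nonempty_iff_eq_empty] at hempty
      simp [hitTime, hempty] at h
    obtain ⟨t', ht', ht'1, ht'S⟩ := csInf_mem hne
    rw [← hitTime, h, Nat.cast_inj] at ht'
    subst ht'
    refine ⟨ht'1, ht'S, fun s hs1 hst hsS => ?_⟩
    have : hitTime S ω ≤ s := sInf_le ⟨s, rfl, hs1, hsS⟩
    rw [h, Nat.cast_le] at this
    omega
  · rintro ⟨ht1, htS, hmin⟩
    refine le_antisymm (sInf_le ⟨t, rfl, ht1, htS⟩) (le_sInf ?_)
    rintro _ ⟨s, rfl, hs1, hsS⟩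
    exact Nat.cast_le.mpr (not_lt.mp fun hst => hmin s hs1 hst hsS)

lemma hitTime_of_mem (h : ω 1 ∈ S) : hitTime S ω = 1 :=
  hitTime_eq_coe_iff.mpr ⟨le_rfl, h, fun s hs1 hs => absurd hs1 (by omega)⟩

lemma hitTime_of_notMem (h : ω 1 ∉ S) : hitTime S ω = hitTime S (pathShift ω) + 1 := by
  cases hshift : hitTime S (pathShift ω) using ENat.recTopCoe with
  | top =>
    rw [hitTime_eq_top_iff] at hshift
    rw [top_add, hitTime_eq_top_iff]
    rintro (_ | _ | t) ht
    · omega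
    · exact h
    · exact hshift (t + 1) (by omega)
  | coe t =>
    obtain ⟨ht1, htS, hmin⟩ := hitTime_eq_coe_iff.mp hshift
    rw [← ENat.natCast_one, ← ENat.natCast_add, hitTime_eq_coe_iff]
    refine ⟨by omega, htS, ?_⟩
    rintro (_ | _ | s) hs1 hst
    · omega
    · exact h
    · exact hmin (s + 1) (by omega) (by omega)

lemma measurableSet_hitTime_eq [MeasurableSpace 𝕏] (hS : MeasurableSet S) (n : ℕ∞) :
    MeasurableSet {ω : ℕ → 𝕏 | hitTime S ω = n} := by
  cases n using ENat.recTopCoe with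
  | top =>
    simp only [hitTime_eq_top_iff]
    measurability
  | coe t =>
    simp only [hitTime_eq_coe_iff]
    measurability

lemma measurable_hitTime [MeasurableSpace 𝕏] (hS : MeasurableSet S) :
    Measurable (hitTime S : (ℕ → 𝕏) → ℕ∞) :=
  measurable_to_countable' fun n => measurableSet_hitTime_eq hS n

end HitTime

section Payoff

variable {𝕏 : Type*} {δ : ℕ → ℝ} {f : 𝕏 → ℝ} {S : Set 𝕏} {ω : ℕ → 𝕏}

lemma stopPayoff_of_hitTime_eq_top (h : hitTime S ω = ⊤) : stopPayoff δ f S ω = 0 := by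
  simp [stopPayoff, h]

lemma stopPayoff_of_hitTime_eq_coe {t : ℕ} (h : hitTime S ω = t) :
    stopPayoff δ f S ω = δ t * f (ω t) := by
  simp [stopPayoff, h]

lemma stopPayoff_of_mem (h : ω 1 ∈ S) : stopPayoff δ f S ω = δ 1 * f (ω 1) :=
  stopPayoff_of_hitTime_eq_coe (t := 1) (hitTime_of_mem h)

lemma stopPayoff_of_notMem (h : ω 1 ∉ S) :
    stopPayoff δ f S ω = stopPayoff (fun t => δ (t + 1)) f S (pathShift ω) := by
  rw [stopPayoff, stopPayoff, hitTime_of_notMem h]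
  cases hitTime S (pathShift ω) using ENat.recTopCoe with
  | top => simp
  | coe t =>
    rw [← ENat.natCast_one, ← ENat.natCast_add]
    simp only [ENat.natCast_ne_top, if_false, ENat.toNat_natCast, pathShift_apply]

lemma stopPayoff_nonneg (hδ : ∀ t, 0 ≤ δ t) (hf : ∀ x, 0 ≤ f x) : 0 ≤ stopPayoff δ f S ω := by
  unfold stopPayoff
  split
  · exact le_rfl
  · exact mul_nonneg (hδ _) (hf _)

lemma stopPayoff_le {C : ℝ} (hδ : ∀ t, 0 ≤ δ t) (hδ_anti : Antitone δ) (hf : ∀ x, 0 ≤ f x)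
    (hfC : ∀ x, f x ≤ C) : stopPayoff δ f S ω ≤ δ 1 * C := by
  cases hhit : hitTime S ω using ENat.recTopCoe with
  | top =>
    rw [stopPayoff_of_hitTime_eq_top hhit]
    exact mul_nonneg (hδ 1) ((hf (ω 0)).trans (hfC _))
  | coe t =>
    rw [stopPayoff_of_hitTime_eq_coe hhit]
    exact mul_le_mul (hδ_anti (hitTime_eq_coe_iff.mp hhit).1) (hfC _) (hf _) (hδ 1)

lemma mul_stopPayoff_le (hDI : ∀ i j, δ i * δ j ≤ δ (i + j)) (hf : ∀ x, 0 ≤ f x) (k : ℕ) :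
    δ k * stopPayoff δ f S ω ≤ stopPayoff (fun t => δ (k + t)) f S ω := by
  cases hhit : hitTime S ω using ENat.recTopCoe with
  | top => simp [stopPayoff_of_hitTime_eq_top hhit]
  | coe t =>
    rw [stopPayoff_of_hitTime_eq_coe hhit, stopPayoff_of_hitTime_eq_coe hhit, ← mul_assoc]
    exact mul_le_mul_of_nonneg_right (hDI k t) (hf _)

lemma measurable_stopPayoff [MeasurableSpace 𝕏] (hS : MeasurableSet S) (hf : Measurable f) :
    Measurable (stopPayoff δ f S) := by
  let F : (ℕ → 𝕏) × ℕ∞ → ℝ := fun p => if p.2 = ⊤ then 0 else δ p.2.toNat * f (p.1 p.2.toNat)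
  have hF : Measurable F := measurable_from_prod_countable_left fun n => by
    cases n using ENat.recTopCoe <;> simp only [F, if_pos, ENat.natCast_ne_top, if_false] <;>
      fun_prop
  exact hF.comp (measurable_id.prodMk (measurable_hitTime hS))

end Payoff

section Value

variable {𝕏 : Type*} [MeasurableSpace 𝕏] {Pr : Kernel 𝕏 (ℕ → 𝕏)} {δ : ℕ → ℝ} {f : 𝕏 → ℝ}
  {S : Set 𝕏} {C : ℝ}

lemma integrable_stopPayoff (μ : Measure (ℕ → 𝕏)) [IsFiniteMeasure μ] (hS : MeasurableSet S)
    (hf : Measurable f) (hδ : ∀ t, 0 ≤ δ t) (hδ_anti : Antitone δ) (hf0 : ∀ x, 0 ≤ f x)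
    (hfC : ∀ x, f x ≤ C) : Integrable (stopPayoff δ f S) μ :=
  .of_bound (measurable_stopPayoff hS hf).aestronglyMeasurable (δ 1 * C) <| ae_of_all _ fun _ => by
    rw [Real.norm_of_nonneg (stopPayoff_nonneg hδ hf0)]
    exact stopPayoff_le hδ hδ_anti hf0 hfC

lemma valJ_nonneg (hδ : ∀ t, 0 ≤ δ t) (hf0 : ∀ x, 0 ≤ f x) (x : 𝕏) : 0 ≤ valJ Pr δ f S x :=
  integral_nonneg fun _ => stopPayoff_nonneg hδ hf0

lemma valJ_le [IsMarkovKernel Pr] (hS : MeasurableSet S) (hf : Measurable f)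
    (hδ : ∀ t, 0 ≤ δ t) (hδ_anti : Antitone δ) (hf0 : ∀ x, 0 ≤ f x) (hfC : ∀ x, f x ≤ C)
    (x : 𝕏) : valJ Pr δ f S x ≤ δ 1 * C :=
  calc valJ Pr δ f S x ≤ ∫ _, δ 1 * C ∂Pr x :=
        integral_mono (integrable_stopPayoff _ hS hf hδ hδ_anti hf0 hfC) (integrable_const _)
          fun _ => stopPayoff_le hδ hδ_anti hf0 hfC
    _ = δ 1 * C := by simp

lemma measurable_valJ (hS : MeasurableSet S) (hf : Measurable f) :
    Measurable (valJ Pr δ f S) :=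
  (measurable_stopPayoff hS hf).stronglyMeasurable.integral_kernel.measurable

lemma mul_valJ_le_valJ [IsMarkovKernel Pr] (hS : MeasurableSet S) (hf : Measurable f)
    (hδ : ∀ t, 0 ≤ δ t) (hδ_anti : Antitone δ) (hf0 : ∀ x, 0 ≤ f x) (hfC : ∀ x, f x ≤ C)
    (hDI : ∀ i j, δ i * δ j ≤ δ (i + j)) (k : ℕ) (x : 𝕏) :
    δ k * valJ Pr δ f S x ≤ valJ Pr (fun t => δ (k + t)) f S x := by
  rw [valJ, ← integral_const_mul]
  exact integral_mono_of_nonneg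
    (ae_of_all _ fun _ => mul_nonneg (hδ k) (stopPayoff_nonneg hδ hf0))
    (integrable_stopPayoff _ hS hf (fun _ => hδ _) (fun _ _ hab => hδ_anti (by omega)) hf0 hfC)
    (ae_of_all _ fun _ => mul_stopPayoff_le hDI hf0 k)

open Classical in
def stepValue (Pr : Kernel 𝕏 (ℕ → 𝕏)) (δ : ℕ → ℝ) (f : 𝕏 → ℝ) (S : Set 𝕏) (y : 𝕏) : ℝ :=
  if y ∈ S then δ 1 * f y else valJ Pr (fun t => δ (t + 1)) f S y

lemma integrable_stepValue (μ : Measure 𝕏) [IsFiniteMeasure μ] [IsMarkovKernel Pr]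
    (hS : MeasurableSet S) (hf : Measurable f) (hδ : ∀ t, 0 ≤ δ t) (hδ_anti : Antitone δ)
    (hf0 : ∀ x, 0 ≤ f x) (hfC : ∀ x, f x ≤ C) : Integrable (stepValue Pr δ f S) μ := by
  have hδ_anti' : Antitone fun t => δ (t + 1) := fun _ _ hab => hδ_anti (by omega)
  have hm : Measurable (stepValue Pr δ f S) :=
    Measurable.ite hS (measurable_const.mul hf) (measurable_valJ hS hf)
  refine .of_bound hm.aestronglyMeasurable (δ 1 * C) (ae_of_all _ fun y => ?_)
  unfold stepValue
  split_ifs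
  · rw [Real.norm_of_nonneg (mul_nonneg (hδ 1) (hf0 y))]
    exact mul_le_mul_of_nonneg_left (hfC y) (hδ 1)
  · rw [Real.norm_of_nonneg (valJ_nonneg (fun _ => hδ _) hf0 y)]
    exact (valJ_le hS hf (fun _ => hδ _) hδ_anti' hf0 hfC y).trans
      (mul_le_mul_of_nonneg_right (hδ_anti (by norm_num)) ((hf0 y).trans (hfC y)))

end Value

section PathSigma

variable {𝕏 : Type*} [MeasurableSpace 𝕏]

lemma pathSigma_le_pi (n : ℕ) : pathSigma 𝕏 n ≤ MeasurableSpace.pi :=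
  iSup₂_le fun i _ => (measurable_pi_apply i).comap_le

lemma measurableSet_pathSigma_box {n m j : ℕ} (hmj : m + j ≤ n + 1) {A : ℕ → Set 𝕏}
    (hA : ∀ i, MeasurableSet (A i)) :
    MeasurableSet[pathSigma 𝕏 n] {ω : ℕ → 𝕏 | ∀ i < m, ω (i + j) ∈ A i} := by
  have hbox : {ω : ℕ → 𝕏 | ∀ i < m, ω (i + j) ∈ A i} =
      ⋂ i ∈ Iio m, (fun ω : ℕ → 𝕏 => ω (i + j)) ⁻¹' A i := by
    ext ω; simp
  rw [hbox]
  refine MeasurableSet.biInter (to_countable _) fun i hi => ?_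
  have hcomap : MeasurableSpace.comap (fun ω : ℕ → 𝕏 => ω (i + j)) ‹_› ≤ pathSigma 𝕏 n :=
    le_iSup₂_of_le (i + j) (by simp only [mem_Iio] at hi; simp; omega) le_rfl
  exact hcomap _ ⟨A i, hA i, rfl⟩

lemma setLIntegral_inter_eval_mem (μ : Measure (ℕ → 𝕏)) (B : Set (ℕ → 𝕏)) (m : ℕ)
    {A : Set 𝕏} (hA : MeasurableSet A) (g : 𝕏 → ℝ≥0∞) :
    ∫⁻ ω in B ∩ {ω | ω m ∈ A}, g (ω m) ∂μ = ∫⁻ ω in B, A.indicator g (ω m) ∂μ := by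
  have hA' : MeasurableSet {ω : ℕ → 𝕏 | ω m ∈ A} := hA.preimage (measurable_pi_apply m)
  rw [inter_comm, ← Measure.restrict_restrict hA', ← lintegral_indicator hA']
  rfl

end PathSigma

namespace IsMarkovChainLaw

variable {𝕏 : Type*} [MeasurableSpace 𝕏] {Pr : Kernel 𝕏 (ℕ → 𝕏)} {Q : Kernel 𝕏 𝕏}

lemma setLIntegral_eval_succ (h : IsMarkovChainLaw Pr Q) (x : 𝕏) {n : ℕ} {B : Set (ℕ → 𝕏)}
    (hB : MeasurableSet[pathSigma 𝕏 n] B) {g : 𝕏 → ℝ≥0∞} (hg : Measurable g) :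
    ∫⁻ ω in B, g (ω (n + 1)) ∂Pr x = ∫⁻ ω in B, ∫⁻ z, g z ∂Q (ω n) ∂Pr x := by
  have hmap : ((Pr x).restrict B).map (· (n + 1)) = (((Pr x).restrict B).map (· n)).bind Q := by
    ext A hA
    rw [Measure.map_apply (measurable_pi_apply _) hA, Measure.bind_apply hA Q.aemeasurable,
      lintegral_map (Q.measurable_coe hA) (measurable_pi_apply n),
      Measure.restrict_apply (measurable_pi_apply _ hA), inter_comm]
    exact h.markov x n B hB A hA
  rw [← lintegral_map hg (measurable_pi_apply _), hmap,
    Measure.lintegral_bind Q.aemeasurable hg.aemeasurable,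
    lintegral_map hg.lintegral_kernel (measurable_pi_apply n)]

variable [IsMarkovKernel Pr] [MeasurableSingletonClass 𝕏]

lemma ae_eval_zero (h : IsMarkovChainLaw Pr Q) (x : 𝕏) : ∀ᵐ ω ∂Pr x, ω 0 = x := by
  have hmeas : MeasurableSet {ω : ℕ → 𝕏 | ω 0 = x} :=
    (measurableSet_singleton x).preimage (measurable_pi_apply 0)
  rw [ae_iff_measure_eq hmeas.nullMeasurableSet, h.start x, measure_univ]

lemma lintegral_eval_zero (h : IsMarkovChainLaw Pr Q) (x : 𝕏) (g : 𝕏 → ℝ≥0∞) :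
    ∫⁻ ω, g (ω 0) ∂Pr x = g x := by
  rw [lintegral_congr_ae ((h.ae_eval_zero x).mono fun ω hω => congrArg g hω)]
  simp

lemma setLIntegral_pathShift_box (h : IsMarkovChainLaw Pr Q) (n : ℕ) {A : ℕ → Set 𝕏}
    (hA : ∀ i, MeasurableSet (A i)) {g : 𝕏 → ℝ≥0∞} (hg : Measurable g) (x : 𝕏) :
    ∫⁻ ω in {ω | ∀ i < n, ω (i + 1) ∈ A i}, g (ω (n + 1)) ∂Pr x =
      ∫⁻ y, ∫⁻ ω in {ω | ∀ i < n, ω i ∈ A i}, g (ω n) ∂Pr y ∂Q x := by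
  induction n generalizing g x with
  | zero =>
    simp only [not_lt_zero, IsEmpty.forall_iff, forall_const, ofPred_true, Measure.restrict_univ]
    rw [← Measure.restrict_univ (μ := Pr x), h.setLIntegral_eval_succ x .univ hg,
      Measure.restrict_univ, h.lintegral_eval_zero x (fun y => ∫⁻ z, g z ∂Q y)]
    simp only [h.lintegral_eval_zero]
  | succ n ih =>
    have hbox : MeasurableSet[pathSigma 𝕏 n] {ω : ℕ → 𝕏 | ∀ i < n + 1, ω i ∈ A i} := by
      simpa using measurableSet_pathSigma_box (j := 0) le_rfl hA
    rw [h.setLIntegral_eval_succ x (measurableSet_pathSigma_box le_rfl hA) hg]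
    simp_rw [h.setLIntegral_eval_succ _ hbox hg]
    simp only [Nat.forall_lt_succ_right, ofPred_and,
      setLIntegral_inter_eval_mem _ _ _ (hA n) (fun z => ∫⁻ w, g w ∂Q z)]
    exact ih (hg.lintegral_kernel.indicator (hA n)) x

variable [IsMarkovKernel Q]

lemma map_pathShift (h : IsMarkovChainLaw Pr Q) (x : 𝕏) : (Pr x).map pathShift = (Pr ∘ₖ Q) x := by
  refine ext_of_generate_finite _ generateFrom_squareCylinders.symm
    (isPiSystem_squareCylinders (fun _ => MeasurableSpace.isPiSystem_measurableSet)
      fun _ => .univ) ?_ (by simp [Measure.map_apply measurable_pathShift MeasurableSet.univ])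
  rintro _ ⟨s, t, ht, rfl⟩
  simp only [mem_univ_pi, mem_ofPred_eq] at ht
  obtain ⟨n, hsn⟩ := Finset.exists_nat_subset_range s
  set A : ℕ → Set 𝕏 := fun i => if i ∈ s then t i else univ
  have hA : ∀ i, MeasurableSet (A i) := fun i => by
    by_cases hi : i ∈ s <;> simp [A, hi, ht i]
  have hbox : (s : Set ℕ).pi t = {ω | ∀ i < n, ω i ∈ A i} := by
    ext ω
    simp only [Set.mem_pi, Finset.mem_coe, mem_ofPred_eq, A]
    refine ⟨fun hω i _ => ?_, fun hω i hi => ?_⟩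
    · split_ifs with hi
      exacts [hω i hi, mem_univ _]
    · simpa [Finset.mem_coe.mp hi] using hω i (Finset.mem_range.mp (hsn hi))
  have hmeas : MeasurableSet {ω : ℕ → 𝕏 | ∀ i < n, ω i ∈ A i} :=
    pathSigma_le_pi n _ (by simpa using measurableSet_pathSigma_box (j := 0) (by omega) hA)
  rw [hbox, Measure.map_apply measurable_pathShift hmeas, Kernel.comp_apply' _ _ _ hmeas]
  simpa using h.setLIntegral_pathShift_box n hA (g := 1) measurable_const x

lemma integral_comp_pathShift (h : IsMarkovChainLaw Pr Q) (x : 𝕏) {g : (ℕ → 𝕏) → ℝ}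
    (hg : Measurable g) (hgi : Integrable (g ∘ pathShift) (Pr x)) :
    ∫ ω, g (pathShift ω) ∂Pr x = ∫ y, ∫ η, g η ∂Pr y ∂Q x := by
  have hgi' : Integrable g ((Pr x).map pathShift) :=
    (integrable_map_measure hg.aestronglyMeasurable measurable_pathShift.aemeasurable).mpr hgi
  rw [← integral_map measurable_pathShift.aemeasurable hg.aestronglyMeasurable,
    h.map_pathShift x] at *
  exact Kernel.integral_comp hgi'

lemma valJ_eq_integral_stepValue (h : IsMarkovChainLaw Pr Q) {δ : ℕ → ℝ} {f : 𝕏 → ℝ}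
    {S : Set 𝕏} {C : ℝ}
    (hS : MeasurableSet S) (hf : Measurable f) (hδ : ∀ t, 0 ≤ δ t) (hδ_anti : Antitone δ)
    (hf0 : ∀ x, 0 ≤ f x) (hfC : ∀ x, f x ≤ C) (x : 𝕏) :
    valJ Pr δ f S x = ∫ y, stepValue Pr δ f S y ∂Q x := by
  classical
  let G : (ℕ → 𝕏) → ℝ := fun η =>
    if η 0 ∈ S then δ 1 * f (η 0) else stopPayoff (fun t => δ (t + 1)) f S η
  have hG : ∀ ω, stopPayoff δ f S ω = G (pathShift ω) := fun ω => by
    by_cases h1 : ω 1 ∈ S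
    · simp [G, h1, stopPayoff_of_mem]
    · simp [G, h1, stopPayoff_of_notMem]
  have hGm : Measurable G :=
    Measurable.ite (hS.preimage (measurable_pi_apply 0)) (by fun_prop) (measurable_stopPayoff hS hf)
  have hGi : Integrable (G ∘ pathShift) (Pr x) :=
    (integrable_stopPayoff _ hS hf hδ hδ_anti hf0 hfC).congr (ae_of_all _ hG)
  calc valJ Pr δ f S x = ∫ ω, G (pathShift ω) ∂Pr x := integral_congr_ae (ae_of_all _ hG)
    _ = ∫ y, ∫ η, G η ∂Pr y ∂Q x := h.integral_comp_pathShift x hGm hGi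
    _ = ∫ y, stepValue Pr δ f S y ∂Q x := integral_congr_ae <| ae_of_all _ fun y => by
      have hGy : ∀ᵐ η ∂Pr y, G η =
          if y ∈ S then δ 1 * f y else stopPayoff (fun t => δ (t + 1)) f S η :=
        (h.ae_eval_zero y).mono fun η hη => by simp only [G, hη]
      dsimp only
      rw [integral_congr_ae hGy, stepValue]
      split_ifs <;> simp [valJ]

end IsMarkovChainLaw

section Intersection

variable {𝕏 : Type*} [MeasurableSpace 𝕏] {Pr : Kernel 𝕏 (ℕ → 𝕏)} [IsMarkovKernel Pr]
  {δ : ℕ → ℝ} {f : 𝕏 → ℝ} {S T : Set 𝕏} {C : ℝ}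

lemma IsEquilibrium.mul_le_valJ_of_notMem (hT : IsEquilibrium Pr δ f T) (hf : Measurable f)
    (hδ : ∀ t, 0 ≤ δ t) (hδ_anti : Antitone δ) (hf0 : ∀ x, 0 ≤ f x) (hfC : ∀ x, f x ≤ C)
    (hDI : ∀ i j, δ i * δ j ≤ δ (i + j)) (k : ℕ) {y : 𝕏} (hy : y ∉ T) :
    δ k * f y ≤ valJ Pr (fun t => δ (k + t)) f T y := by
  have hfy : f y ≤ valJ Pr δ f T y := by
    by_contra hlt
    exact hy (hT.2 ▸ (not_le.mp hlt).le)
  exact (mul_le_mul_of_nonneg_left hfy (hδ k)).trans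
    (mul_valJ_le_valJ hT.1 hf hδ hδ_anti hf0 hfC hDI k y)

variable [MeasurableSingletonClass 𝕏] {Q : Kernel 𝕏 𝕏} [IsMarkovKernel Q]

lemma IsMarkovChainLaw.valJ_le_valJ_inter_add (h : IsMarkovChainLaw Pr Q)
    (hS : MeasurableSet S) (hT : IsEquilibrium Pr δ f T) (hf : Measurable f)
    (hδ : ∀ t, 0 ≤ δ t) (hδ_anti : Antitone δ) (hf0 : ∀ x, 0 ≤ f x) (hfC : ∀ x, f x ≤ C)
    (hDI : ∀ i j, δ i * δ j ≤ δ (i + j)) {k : ℕ} {ε : ℝ} (hε : 0 ≤ ε)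
    (hSε : ∀ y, valJ Pr (fun t => δ (k + 1 + t)) f S y ≤
      valJ Pr (fun t => δ (k + 1 + t)) f (S ∩ T) y + ε)
    (hTε : ∀ y, valJ Pr (fun t => δ (k + 1 + t)) f T y ≤
      valJ Pr (fun t => δ (k + 1 + t)) f (S ∩ T) y + ε) (x : 𝕏) :
    valJ Pr (fun t => δ (k + t)) f S x ≤ valJ Pr (fun t => δ (k + t)) f (S ∩ T) x + ε := by
  have hδk : ∀ t, 0 ≤ δ (k + t) := fun _ => hδ _
  have hδk_anti : Antitone fun t => δ (k + t) := fun _ _ hab => hδ_anti (by omega)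
  have hST : MeasurableSet (S ∩ T) := hS.inter hT.1
  have hshift : (fun t => δ (k + (t + 1))) = fun t => δ (k + 1 + t) :=
    funext fun t => by rw [add_assoc, add_comm 1]
  have hstep : ∀ y, stepValue Pr (fun t => δ (k + t)) f S y ≤
      stepValue Pr (fun t => δ (k + t)) f (S ∩ T) y + ε := fun y => by
    simp only [stepValue, hshift]
    by_cases hyS : y ∈ S
    · by_cases hyT : y ∈ T
      · simp [hyS, hyT, hε]
      · rw [if_pos hyS, if_neg fun hy => hyT hy.2]
        exact (hT.mul_le_valJ_of_notMem hf hδ hδ_anti hf0 hfC hDI (k + 1) hyT).trans (hTε y)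
    · rw [if_neg hyS, if_neg fun hy => hyS hy.1]
      exact hSε y
  have hint : ∀ W, MeasurableSet W → Integrable (stepValue Pr (fun t => δ (k + t)) f W) (Q x) :=
    fun W hW => integrable_stepValue _ hW hf hδk hδk_anti hf0 hfC
  rw [h.valJ_eq_integral_stepValue hS hf hδk hδk_anti hf0 hfC,
    h.valJ_eq_integral_stepValue hST hf hδk hδk_anti hf0 hfC]
  calc ∫ y, stepValue Pr (fun t => δ (k + t)) f S y ∂Q x
      ≤ ∫ y, (stepValue Pr (fun t => δ (k + t)) f (S ∩ T) y + ε) ∂Q x :=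
        integral_mono (hint S hS) ((hint _ hST).add (integrable_const ε)) hstep
    _ = ∫ y, stepValue Pr (fun t => δ (k + t)) f (S ∩ T) y ∂Q x + ε := by
        rw [integral_add (hint _ hST) (integrable_const ε)]
        simp

lemma IsMarkovChainLaw.valJ_le_valJ_inter_add_tail (h : IsMarkovChainLaw Pr Q)
    (hS : IsEquilibrium Pr δ f S) (hT : IsEquilibrium Pr δ f T) (hf : Measurable f)
    (hδ : ∀ t, 0 ≤ δ t) (hδ_anti : Antitone δ) (hf0 : ∀ x, 0 ≤ f x) (hfC : ∀ x, f x ≤ C)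
    (hDI : ∀ i j, δ i * δ j ≤ δ (i + j)) (n k : ℕ) (x : 𝕏) :
    valJ Pr (fun t => δ (k + t)) f S x ≤
        valJ Pr (fun t => δ (k + t)) f (S ∩ T) x + δ (k + n + 1) * C ∧
      valJ Pr (fun t => δ (k + t)) f T x ≤
        valJ Pr (fun t => δ (k + t)) f (S ∩ T) x + δ (k + n + 1) * C := by
  induction n generalizing k x with
  | zero =>
    have hδk_anti : Antitone fun t => δ (k + t) := fun _ _ hab => hδ_anti (by omega)
    have hU := valJ_nonneg (Pr := Pr) (S := S ∩ T) (fun t => hδ (k + t)) hf0 x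
    exact ⟨(valJ_le hS.1 hf (fun _ => hδ _) hδk_anti hf0 hfC x).trans (le_add_of_nonneg_left hU),
      (valJ_le hT.1 hf (fun _ => hδ _) hδk_anti hf0 hfC x).trans (le_add_of_nonneg_left hU)⟩
  | succ n ih =>
    have hε : 0 ≤ δ (k + (n + 1) + 1) * C := mul_nonneg (hδ _) ((hf0 x).trans (hfC x))
    have ih' := fun y => ih (k + 1) y
    rw [show k + 1 + n + 1 = k + (n + 1) + 1 by omega] at ih'
    constructor
    · exact h.valJ_le_valJ_inter_add hS.1 hT hf hδ hδ_anti hf0 hfC hDI hε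
        (fun y => (ih' y).1) (fun y => (ih' y).2) x
    · rw [inter_comm]
      refine h.valJ_le_valJ_inter_add hT.1 hS hf hδ hδ_anti hf0 hfC hDI hε
        (fun y => ?_) (fun y => ?_) x <;> rw [inter_comm]
      exacts [(ih' y).2, (ih' y).1]

lemma IsMarkovChainLaw.valJ_le_valJ_inter (h : IsMarkovChainLaw Pr Q)
    (hS : IsEquilibrium Pr δ f S) (hT : IsEquilibrium Pr δ f T) (hf : Measurable f)
    (hδ : ∀ t, 0 ≤ δ t) (hδ_anti : Antitone δ) (hδ_lim : Tendsto δ atTop (𝓝 0))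
    (hf0 : ∀ x, 0 ≤ f x) (hfC : ∀ x, f x ≤ C) (hDI : ∀ i j, δ i * δ j ≤ δ (i + j)) (x : 𝕏) :
    valJ Pr δ f S x ≤ valJ Pr δ f (S ∩ T) x ∧ valJ Pr δ f T x ≤ valJ Pr δ f (S ∩ T) x := by
  have hbound := fun n => h.valJ_le_valJ_inter_add_tail hS hT hf hδ hδ_anti hf0 hfC hDI n 0 x
  simp only [zero_add] at hbound
  have hlim : Tendsto (fun n => valJ Pr δ f (S ∩ T) x + δ (n + 1) * C) atTop
      (𝓝 (valJ Pr δ f (S ∩ T) x)) := by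
    simpa using tendsto_const_nhds.add ((hδ_lim.comp (tendsto_add_atTop_nat 1)).mul_const C)
  exact ⟨ge_of_tendsto' hlim fun n => (hbound n).1, ge_of_tendsto' hlim fun n => (hbound n).2⟩

end Intersection

theorem intersection_improves_general
    {𝕏 : Type*} [TopologicalSpace 𝕏] [PolishSpace 𝕏] [MeasurableSpace 𝕏] [BorelSpace 𝕏]
    (Pr : Kernel 𝕏 (ℕ → 𝕏)) [IsMarkovKernel Pr] (Q : Kernel 𝕏 𝕏) [IsMarkovKernel Q]
    (hchain : IsMarkovChainLaw Pr Q)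
    (f : 𝕏 → ℝ) (hf_meas : Measurable f) (hf_nonneg : ∀ x, 0 ≤ f x)
    (hf_bdd : ∃ C : ℝ, ∀ x, f x ≤ C)
    (δ : ℕ → ℝ) (hδ_mem : ∀ k, δ k ∈ Set.Icc (0 : ℝ) 1) (hδ_anti : StrictAnti δ)
    (hδ_lim : Tendsto δ atTop (𝓝 0))
    (hDI : ∀ i j : ℕ, δ i * δ j ≤ δ (i + j))
    (S T : Set 𝕏) (hS : IsEquilibrium Pr δ f S) (hT : IsEquilibrium Pr δ f T) :
    (∀ x : 𝕏, max (valJ Pr δ f S x) (valJ Pr δ f T x) ≤ valJ Pr δ f (S ∩ T) x) ∧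
    Θ Pr δ f (S ∩ T) ⊆ S ∩ T := by
  obtain ⟨C, hfC⟩ := hf_bdd
  have hle := hchain.valJ_le_valJ_inter hS hT hf_meas (fun t => (hδ_mem t).1)
    hδ_anti.antitone hδ_lim hf_nonneg hfC hDI
  refine ⟨fun x => max_le (hle x).1 (hle x).2, fun x hx => ⟨?_, ?_⟩⟩
  · rw [← hS.2]
    exact (hle x).1.trans hx
  · rw [← hT.2]
    exact (hle x).2.trans hx

/-- Under decreasing impatience, for any two equilibria `S, T`,
`J(x, ρ(x, S∩T)) ≥ max (J(x, ρ(x,S))) (J(x, ρ(x,T)))` for all `x`;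
in particular `Θ(S∩T) ⊆ S∩T`. -/
theorem intersection_improves
    {𝕏 : Type*} [TopologicalSpace 𝕏] [PolishSpace 𝕏] [MeasurableSpace 𝕏] [BorelSpace 𝕏]
    (Pr : Kernel 𝕏 (ℕ → 𝕏)) [IsMarkovKernel Pr] (Q : Kernel 𝕏 𝕏) [IsMarkovKernel Q]
    (hchain : IsMarkovChainLaw Pr Q)
    (f : 𝕏 → ℝ) (hf_meas : Measurable f) (hf_nonneg : ∀ x, 0 ≤ f x)
    (hf_bdd : ∃ C : ℝ, ∀ x, f x ≤ C)
    (δ : ℕ → ℝ) (hδ_mem : ∀ k, δ k ∈ Set.Icc (0 : ℝ) 1) (hδ_anti : StrictAnti δ)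
    (hδ_zero : δ 0 = 1) (hδ_lim : Tendsto δ atTop (𝓝 0))
    (hDI : ∀ i j : ℕ, δ i * δ j ≤ δ (i + j))
    (S T : Set 𝕏) (hS : IsEquilibrium Pr δ f S) (hT : IsEquilibrium Pr δ f T) :
    (∀ x : 𝕏, max (valJ Pr δ f S x) (valJ Pr δ f T x) ≤ valJ Pr δ f (S ∩ T) x) ∧
    Θ Pr δ f (S ∩ T) ⊆ S ∩ T :=
  intersection_improves_general Pr Q hchain f hf_meas hf_nonneg hf_bdd δ hδ_mem hδ_anti hδ_lim hDI S
    T hS hT
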